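/- Fix θ ∈ (0,π), let Q_u = ⋂_{m∈ℤ} H_m ⊂ tildeL with H_m = {(z,α,r) ∈ tildeL : r·cos(α+mθ) ≤ 1 or |α+mθ| ≥ π/2}, and let π(z,α,r) = (z, r·e^{iα}). Let g = (z₀,w₀) ∈ ℂ² with |z₀|² − |w₀|² = −1, set x = conj(z₀)/conj(w₀) (so |x| < 1), and let g act on ℂ² by the linear map (z',w') ↦ (conj(w₀)·z' + z₀·w', conj(z₀)·z' + w₀·w') (left multiplication in SU(1,1)). Then for every point (z,w) in the image g·π(Q_u): |w| − |z| ≤ |w − x·z| ≤ √(1−|x|²)/cos(θ/2). -/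

import Mathlib

open Real

/-- `tildeL = {(z,α,r) ∈ ℂ×ℝ×ℝ : 0 < r, |z| < r}`. -/
def tL : Set (ℂ × ℝ × ℝ) := {x | 0 < x.2.2 ∧ ‖x.1‖ < x.2.2}

/-- The covering map `π(z,α,r) = (z, r·e^{iα})` (defined on all of `ℂ×ℝ×ℝ`). -/
noncomputable def piAmb (x : ℂ × ℝ × ℝ) : ℂ × ℂ :=
  (x.1, (x.2.2 : ℂ) * Complex.exp ((x.2.1 : ℂ) * Complex.I))

/-- `H_m = {(z,α,r) ∈ tildeL : r·cos(α+mθ) ≤ 1 or |α+mθ| ≥ π/2}`. -/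
noncomputable def Hhalf (θ : ℝ) (m : ℤ) : Set (ℂ × ℝ × ℝ) :=
  {x ∈ tL | x.2.2 * Real.cos (x.2.1 + (m : ℝ) * θ) ≤ 1 ∨ π / 2 ≤ |x.2.1 + (m : ℝ) * θ|}

/-- The prismatic set `Q_u = ⋂_{m∈ℤ} H_m`. -/
noncomputable def Qu (θ : ℝ) : Set (ℂ × ℝ × ℝ) := ⋂ m : ℤ, Hhalf θ m

/-- Left multiplication by `g = (z₀,w₀) ∈ SU(1,1)` on `ℂ²`:
`(z',w') ↦ (conj(w₀)·z' + z₀·w', conj(z₀)·z' + w₀·w')`. -/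
noncomputable def lmul (z₀ w₀ : ℂ) (q : ℂ × ℂ) : ℂ × ℂ :=
  ((starRingEnd ℂ) w₀ * q.1 + z₀ * q.2, (starRingEnd ℂ) z₀ * q.1 + w₀ * q.2)

/-!
The prism `Q_u` lies in the region `r · cos(θ/2) ≤ 1`: every angle `α` is within `θ/2 < π/2` of
some `-mθ`, and then the half-space `H_m` forces `r · cos(θ/2) ≤ r · cos(α + mθ) ≤ 1`.
For `(z, w) = g · (z', w')` the relation `|w₀|² - |z₀|² = 1` gives `w - x z = w' / conj(w₀)`,
where `|w'| = r`; since `|w₀|⁻¹ = √(1 - |x|²)`, this is the upper bound. The lower bound is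
the triangle inequality together with `|x| ≤ 1`.
-/

open ComplexConjugate

lemma exists_int_abs_add_int_mul_le_half {θ : ℝ} (hθ : 0 < θ) (α : ℝ) :
    ∃ m : ℤ, |α + m * θ| ≤ θ / 2 := by
  refine ⟨-round (α / θ), ?_⟩
  have h : α + ((-round (α / θ) : ℤ) : ℝ) * θ = (α / θ - round (α / θ)) * θ := by
    push_cast
    rw [sub_mul, div_mul_cancel₀ _ hθ.ne']
    ring
  rw [h, abs_mul, abs_of_pos hθ]
  nlinarith [abs_sub_round (α / θ)]

lemma mul_cos_half_le_one_of_mem_Qu {θ : ℝ} (hθ : 0 < θ) (hθπ : θ < π) {q : ℂ × ℝ × ℝ}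
    (hq : q ∈ Qu θ) : q.2.2 * cos (θ / 2) ≤ 1 := by
  obtain ⟨m, hm⟩ := exists_int_abs_add_int_mul_le_half hθ q.2.1
  obtain ⟨⟨hr, -⟩, hcut⟩ : q ∈ Hhalf θ m := Set.mem_iInter.mp hq m
  have hcos : cos (θ / 2) ≤ cos (q.2.1 + m * θ) := by
    rw [← cos_abs (q.2.1 + m * θ)]
    exact cos_le_cos_of_nonneg_of_le_pi (abs_nonneg _) (by linarith) hm
  rcases hcut with h | h
  · nlinarith
  · linarith

lemma norm_piAmb_snd {q : ℂ × ℝ × ℝ} (hr : 0 ≤ q.2.2) : ‖(piAmb q).2‖ = q.2.2 := by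
  rw [piAmb, norm_mul, Complex.norm_exp_ofReal_mul_I, mul_one, Complex.norm_real,
    Real.norm_eq_abs, abs_of_nonneg hr]

lemma sub_norm_le_norm_sub_mul {R : Type*} [SeminormedRing R] {x : R} (hx : ‖x‖ ≤ 1)
    (z w : R) : ‖w‖ - ‖z‖ ≤ ‖w - x * z‖ :=
  calc ‖w‖ - ‖z‖ ≤ ‖w‖ - ‖x * z‖ := by
        gcongr
        exact (norm_mul_le x z).trans (mul_le_of_le_one_left (norm_nonneg z) hx)
    _ ≤ ‖w - x * z‖ := norm_sub_norm_le w (x * z)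

section SU11

variable {z₀ w₀ : ℂ}

lemma norm_pos_of_su11 (hg : ‖z₀‖ ^ 2 - ‖w₀‖ ^ 2 = -1) : 0 < ‖w₀‖ := by
  nlinarith [norm_nonneg w₀, sq_nonneg ‖z₀‖]

lemma norm_conj_div_conj : ‖conj z₀ / conj w₀‖ = ‖z₀‖ / ‖w₀‖ := by
  rw [norm_div, RCLike.norm_conj, RCLike.norm_conj]

lemma norm_conj_div_conj_le_one (hg : ‖z₀‖ ^ 2 - ‖w₀‖ ^ 2 = -1) : ‖conj z₀ / conj w₀‖ ≤ 1 := by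
  rw [norm_conj_div_conj, div_le_one (norm_pos_of_su11 hg)]
  nlinarith [norm_nonneg z₀, norm_nonneg w₀]

lemma sqrt_one_sub_norm_conj_div_conj_sq (hg : ‖z₀‖ ^ 2 - ‖w₀‖ ^ 2 = -1) :
    √(1 - ‖conj z₀ / conj w₀‖ ^ 2) = ‖w₀‖⁻¹ := by
  have hw := norm_pos_of_su11 hg
  rw [← sqrt_sq (inv_nonneg.mpr hw.le), norm_conj_div_conj]
  congr 1
  field_simp
  linarith

lemma lmul_snd_sub_conj_div_conj_mul_fst (hg : ‖z₀‖ ^ 2 - ‖w₀‖ ^ 2 = -1) (q : ℂ × ℂ) :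
    (lmul z₀ w₀ q).2 - conj z₀ / conj w₀ * (lmul z₀ w₀ q).1 = q.2 / conj w₀ := by
  have hw : conj w₀ ≠ 0 := by simpa using norm_pos_iff.mp (norm_pos_of_su11 hg)
  have hdet : w₀ * conj w₀ - z₀ * conj z₀ = 1 := by
    rw [Complex.mul_conj, Complex.mul_conj, Complex.normSq_eq_norm_sq,
      Complex.normSq_eq_norm_sq]
    norm_cast
    linarith
  simp only [lmul]
  field_simp
  linear_combination q.2 * hdet

end SU11

theorem stmt16 (θ : ℝ) (hθ : 0 < θ) (hθπ : θ < π) (z₀ w₀ : ℂ)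
    (hg : ‖z₀‖ ^ 2 - ‖w₀‖ ^ 2 = -1) :
    ∀ p ∈ lmul z₀ w₀ '' (piAmb '' Qu θ),
      ‖p.2‖ - ‖p.1‖ ≤ ‖p.2 - ((starRingEnd ℂ) z₀ / (starRingEnd ℂ) w₀) * p.1‖ ∧
      ‖p.2 - ((starRingEnd ℂ) z₀ / (starRingEnd ℂ) w₀) * p.1‖ ≤
        Real.sqrt (1 - ‖(starRingEnd ℂ) z₀ / (starRingEnd ℂ) w₀‖ ^ 2) /
          Real.cos (θ / 2) := by
  rintro _ ⟨_, ⟨q, hq, rfl⟩, rfl⟩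
  refine ⟨sub_norm_le_norm_sub_mul (norm_conj_div_conj_le_one hg) _ _, ?_⟩
  have hr : 0 < q.2.2 := (Set.mem_iInter.mp hq 0).1.1
  have hw := norm_pos_of_su11 hg
  have hcos : 0 < cos (θ / 2) := cos_pos_of_mem_Ioo ⟨by linarith [pi_pos], by linarith⟩
  rw [lmul_snd_sub_conj_div_conj_mul_fst hg, norm_div, RCLike.norm_conj, norm_piAmb_snd hr.le,
    sqrt_one_sub_norm_conj_div_conj_sq hg, div_le_div_iff₀ hw hcos, inv_mul_cancel₀ hw.ne']
  exact mul_cos_half_le_one_of_mem_Qu hθ hθπ hq
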